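/- Suppose F, L_1,…,L_J are convex on the compact convex set X, the Slater point x̃ ∈ X satisfies max_j L_j(x̃) + σ₀ ≤ 0 with σ₀ > 0, and 0 ≤ θ ≤ σ₀/2 so that strong duality holds for the tightened problem (P_θ). Then any optimal dual variable λ^θ ≥ 0 of (P_θ) satisfies Σ_{j=1}^J λ_j^θ ≤ (F(x̃) − F(x^θ))/(σ₀ − θ), and moreover F(x*) ≤ F(x^θ) ≤ F(x*) + θ Σ_{j=1}^J λ_j^θ, where x* is a minimizer of the original problem (P). -/

import Mathlib

/-!
Strong duality makes `F(x^θ)` the infimum over `X` of the Lagrangian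
`F + Σ_j λ_j^θ (L_j + θ)`, so `F(x^θ)` is at most its value at any point of `X`. At the Slater
point every `L_j + θ` is at most `θ - σ₀`, and at `x*` at most `θ`; this gives the two bounds.
The only subtlety is that `sInf` of a set that is not bounded below is a junk value: the
Lagrangian is convex, and a convex function on a bounded set in finite dimensions is bounded
below. For the latter, pick a point `p` in the intrinsic interior of a simplex spanning the
affine hull of the set; the function is bounded above near `p`, and convexity along the line
through `z` and `p` turns this into a lower bound at every `z`.
-/

open Set

section ConvexLowerBound

variable {E : Type*} [NormedAddCommGroup E] [NormedSpace ℝ E] {s : Set E} {f : E → ℝ}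

theorem convexOn_finset_sum {ι : Type*} (t : Finset ι) {g : ι → E → ℝ} (hs : Convex ℝ s)
    (hg : ∀ i ∈ t, ConvexOn ℝ s (g i)) : ConvexOn ℝ s (fun x => ∑ i ∈ t, g i x) := by
  simpa only [← Finset.sum_apply] using
    Finset.sum_induction g (ConvexOn ℝ s) (fun _ _ => ConvexOn.add) (convexOn_const 0 hs) hg

/-- `p` lies on the segment from `z` to the extrapolated point `p + c • (p - z)`. -/
theorem ConvexOn.one_add_mul_le_extrapolate (hf : ConvexOn ℝ s f) {p z : E} {c : ℝ}
    (hc : 0 ≤ c) (hz : z ∈ s) (hw : p + c • (p - z) ∈ s) :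
    (1 + c) * f p ≤ c * f z + f (p + c • (p - z)) := by
  have hc' : 0 < 1 + c := by linarith
  have hp : (c / (1 + c)) • z + (1 + c)⁻¹ • (p + c • (p - z)) = p := by
    match_scalars <;> field_simp
    ring
  have h := hf.2 hz hw (by positivity : 0 ≤ c / (1 + c)) (by positivity : 0 ≤ (1 + c)⁻¹)
    (by field_simp; ring)
  rw [hp, smul_eq_mul, smul_eq_mul] at h
  have := mul_le_mul_of_nonneg_left h hc'.le
  field_simp at this
  linarith

theorem exists_finite_convexHull_mem_nhds_affineSpan [FiniteDimensional ℝ E] (hs : s.Nonempty) :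
    ∃ t ⊆ s, t.Finite ∧ ∃ p ∈ convexHull ℝ t, ∃ r > 0,
      ∀ y ∈ affineSpan ℝ s, dist y p < r → y ∈ convexHull ℝ t := by
  obtain ⟨t, hts, hspan, hind⟩ := exists_affineIndependent ℝ E s
  have ht : t.Nonempty := by
    rw [nonempty_iff_ne_empty]
    rintro rfl
    obtain ⟨x, hx⟩ := hs
    have := subset_affineSpan ℝ s hx
    rw [← hspan, AffineSubspace.span_empty] at this
    exact AffineSubspace.notMem_bot ℝ E x this
  obtain ⟨p, hp⟩ := ht.convexHull.intrinsicInterior (convex_convexHull ℝ t)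
  obtain ⟨⟨p, hpspan⟩, hpint, rfl⟩ := mem_intrinsicInterior.1 hp
  obtain ⟨r, hr, hball⟩ := Metric.mem_nhds_iff.1 (mem_interior_iff_mem_nhds.1 hpint)
  refine ⟨t, hts, finite_set_of_fin_dim_affineIndependent ℝ hind, p,
    intrinsicInterior_subset hp, r, hr, fun y hy hyp => ?_⟩
  rw [← hspan, ← affineSpan_convexHull] at hy
  exact hball (show dist (⟨y, hy⟩ : affineSpan ℝ _) ⟨p, hpspan⟩ < r from hyp)

theorem ConvexOn.bddBelow_image_of_isBounded [FiniteDimensional ℝ E] (hf : ConvexOn ℝ s f)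
    (hs : Bornology.IsBounded s) : BddBelow (f '' s) := by
  rcases s.eq_empty_or_nonempty with rfl | hne
  · simp
  obtain ⟨t, hts, ht, p, hp, r, hr, hball⟩ := exists_finite_convexHull_mem_nhds_affineSpan hne
  have hhull : convexHull ℝ t ⊆ s := hf.1.convexHull_subset_iff.2 hts
  obtain ⟨M, hM⟩ := hf.bddAbove_convexHull hts (ht.image f).bddAbove
  obtain ⟨R, hR⟩ := hs.subset_closedBall p
  set c := r / (|R| + 1)
  have hc : 0 < c := by positivity
  refine ⟨((1 + c) * f p - M) / c, ?_⟩
  rintro _ ⟨z, hz, rfl⟩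
  have hw : p + c • (p - z) ∈ convexHull ℝ t := by
    refine hball _ ?_ ?_
    · have hpspan := subset_affineSpan ℝ s (hhull hp)
      simpa [add_comm] using (affineSpan ℝ s).smul_vsub_vadd_mem c hpspan
        (subset_affineSpan ℝ s hz) hpspan
    · have hzR : dist z p ≤ |R| := (Metric.mem_closedBall.1 (hR hz)).trans (le_abs_self R)
      rw [dist_self_add_left, norm_smul, Real.norm_of_nonneg hc.le, ← dist_eq_norm, dist_comm]
      calc c * dist z p ≤ c * |R| := by gcongr
        _ < c * (|R| + 1) := by linarith
        _ = r := div_mul_cancel₀ r (by positivity)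
  rw [div_le_iff₀ hc]
  linarith [hf.one_add_mul_le_extrapolate hc.le hz (hhull hw), hM (mem_image_of_mem f hw)]

end ConvexLowerBound

theorem Finset.sum_mul_le_mul_sum {ι : Type*} (t : Finset ι) {w g : ι → ℝ} {a : ℝ}
    (hw : ∀ i ∈ t, 0 ≤ w i) (hg : ∀ i ∈ t, g i ≤ a) : ∑ i ∈ t, w i * g i ≤ a * ∑ i ∈ t, w i := by
  rw [Finset.mul_sum]
  exact Finset.sum_le_sum fun i hi => by
    rw [mul_comm a]
    exact mul_le_mul_of_nonneg_left (hg i hi) (hw i hi)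

theorem tightened_problem_dual_sum_bound_general
    {n J : ℕ}
    -- compact convex feasible set
    (X : Set (EuclideanSpace ℝ (Fin n)))
    (hXcompact : IsCompact X)
    -- convex objective and constraints
    (F : EuclideanSpace ℝ (Fin n) → ℝ) (L : Fin J → EuclideanSpace ℝ (Fin n) → ℝ)
    (hFconv : ConvexOn ℝ X F) (hLconv : ∀ j, ConvexOn ℝ X (L j))
    -- Slater point
    (xtil : EuclideanSpace ℝ (Fin n)) (hxtilX : xtil ∈ X)
    (σ₀ : ℝ) (hσ₀ : 0 < σ₀) (hSlater : ∀ j, L j xtil + σ₀ ≤ 0)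
    -- the tightening parameter
    (θ : ℝ) (hθ : 0 ≤ θ) (hθ' : θ ≤ σ₀ / 2)
    -- `x*` is optimal for the original problem (P)
    (xstar : EuclideanSpace ℝ (Fin n))
    (hxstarX : xstar ∈ X) (hxstarFeas : ∀ j, L j xstar ≤ 0)
    (hxstarOpt : ∀ z ∈ X, (∀ j, L j z ≤ 0) → F xstar ≤ F z)
    -- `x^θ` is optimal for the tightened problem (P_θ)
    (xθ : EuclideanSpace ℝ (Fin n))
    (hxθX : xθ ∈ X) (hxθFeas : ∀ j, L j xθ + θ ≤ 0)
    -- `λ^θ ≥ 0` is optimal for the dual of (P_θ)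
    (lamθ : Fin J → ℝ) (hlamθ_nonneg : ∀ j, 0 ≤ lamθ j)
    -- strong duality for (P_θ)
    (hStrongDuality : sInf ((fun z => F z + ∑ j, lamθ j * (L j z + θ)) '' X) = F xθ) :
    (∑ j, lamθ j ≤ (F xtil - F xθ) / (σ₀ - θ))
      ∧ F xstar ≤ F xθ ∧ F xθ ≤ F xstar + θ * ∑ j, lamθ j := by
  have hLagrangian : ConvexOn ℝ X (fun z => F z + ∑ j, lamθ j * (L j z + θ)) :=
    hFconv.add <| convexOn_finset_sum _ hFconv.1 fun j _ =>
      ((hLconv j).add_const θ).smul (hlamθ_nonneg j)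
  have hdual : ∀ x ∈ X, F xθ ≤ F x + ∑ j, lamθ j * (L j x + θ) := fun x hx =>
    hStrongDuality ▸ csInf_le (hLagrangian.bddBelow_image_of_isBounded hXcompact.isBounded)
      (mem_image_of_mem _ hx)
  have hSlaterSum := Finset.univ.sum_mul_le_mul_sum (g := fun j => L j xtil + θ) (a := θ - σ₀) (fun j _ => hlamθ_nonneg j)
    fun j _ => by linarith [hSlater j]
  have hstarSum := Finset.univ.sum_mul_le_mul_sum (g := fun j => L j xstar + θ) (a := θ) (fun j _ => hlamθ_nonneg j)
    fun j _ => by linarith [hxstarFeas j]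
  refine ⟨?_, hxstarOpt xθ hxθX fun j => by linarith [hxθFeas j], ?_⟩
  · rw [le_div_iff₀ (by linarith)]
    linarith [hdual xtil hxtilX]
  · linarith [hdual xstar hxstarX]

/-- proof of Lemma 2: under convexity, the Slater condition
`max_j L_j(x̃) + σ₀ ≤ 0`, `0 ≤ θ ≤ σ₀/2` and strong duality for the tightened problem (P_θ),
any optimal dual variable `λ^θ ≥ 0` of (P_θ) satisfies
`Σ_j λ_j^θ ≤ (F(x̃) − F(x^θ))/(σ₀ − θ)`, and moreover
`F(x*) ≤ F(x^θ) ≤ F(x*) + θ Σ_j λ_j^θ`. -/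
theorem tightened_problem_dual_sum_bound
    {n J : ℕ}
    -- compact convex feasible set
    (X : Set (EuclideanSpace ℝ (Fin n)))
    (hXconv : Convex ℝ X) (hXcompact : IsCompact X) (hXne : X.Nonempty)
    -- convex objective and constraints
    (F : EuclideanSpace ℝ (Fin n) → ℝ) (L : Fin J → EuclideanSpace ℝ (Fin n) → ℝ)
    (hFconv : ConvexOn ℝ X F) (hLconv : ∀ j, ConvexOn ℝ X (L j))
    -- Slater point
    (xtil : EuclideanSpace ℝ (Fin n)) (hxtilX : xtil ∈ X)
    (σ₀ : ℝ) (hσ₀ : 0 < σ₀) (hSlater : ∀ j, L j xtil + σ₀ ≤ 0)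
    -- the tightening parameter
    (θ : ℝ) (hθ : 0 ≤ θ) (hθ' : θ ≤ σ₀ / 2)
    -- `x*` is optimal for the original problem (P)
    (xstar : EuclideanSpace ℝ (Fin n))
    (hxstarX : xstar ∈ X) (hxstarFeas : ∀ j, L j xstar ≤ 0)
    (hxstarOpt : ∀ z ∈ X, (∀ j, L j z ≤ 0) → F xstar ≤ F z)
    -- `x^θ` is optimal for the tightened problem (P_θ)
    (xθ : EuclideanSpace ℝ (Fin n))
    (hxθX : xθ ∈ X) (hxθFeas : ∀ j, L j xθ + θ ≤ 0)
    (hxθOpt : ∀ z ∈ X, (∀ j, L j z + θ ≤ 0) → F xθ ≤ F z)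
    -- `λ^θ ≥ 0` is optimal for the dual of (P_θ)
    (lamθ : Fin J → ℝ) (hlamθ_nonneg : ∀ j, 0 ≤ lamθ j)
    (hlamθ_opt : ∀ lam : Fin J → ℝ, (∀ j, 0 ≤ lam j) →
      sInf ((fun z => F z + ∑ j, lam j * (L j z + θ)) '' X)
        ≤ sInf ((fun z => F z + ∑ j, lamθ j * (L j z + θ)) '' X))
    -- strong duality for (P_θ)
    (hStrongDuality : sInf ((fun z => F z + ∑ j, lamθ j * (L j z + θ)) '' X) = F xθ) :
    (∑ j, lamθ j ≤ (F xtil - F xθ) / (σ₀ - θ))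
      ∧ F xstar ≤ F xθ ∧ F xθ ≤ F xstar + θ * ∑ j, lamθ j :=
  tightened_problem_dual_sum_bound_general X hXcompact F L hFconv hLconv xtil hxtilX σ₀ hσ₀ hSlater
    θ hθ hθ' xstar hxstarX hxstarFeas hxstarOpt xθ hxθX hxθFeas lamθ hlamθ_nonneg hStrongDuality
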